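/- arXiv:2008.13163 — 3 statements merged into one kernel-verified Lean document; each statement's English description precedes it below -/
import Mathlib

section
/- For positive integers k, l with k ≥ 2 and l ≥ 2, ((-1)^l - (-1)^k) S(1,k+l) = ∑_{j=1}^{l} (-1)^{j-1} T(l+1-j) T(k+j) + ∑_{j=1}^{k} (-1)^{j} T(k+1-j) T(l+j), where T(1) := 2 log 2, T(s) := 2∑_{m≥1} 1/(2m-1)^s for s ≥ 2, and S(1,m) := 4∑_{0<a<b, a even, b odd} 1/(a · b^m) = 4∑_{0<i<j} 1/((2i)(2j-1)^m). -/
/-- Depth-one multiple T-value with the convention `T(1) = 2 log 2`. -/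
noncomputable def Tval (s : ℕ) : ℝ :=
  if s = 1 then 2 * Real.log 2 else 2 * ∑' m : ℕ, (1 : ℝ) / (2 * (m : ℝ) + 1) ^ s

/-- Depth-two multiple S-value `S(1,m) = 4 ∑_{0<i<j} 1/((2i)(2j-1)^m)`. -/
noncomputable def S1 (m : ℕ) : ℝ :=
  4 * ∑' (i : ℕ) (j : ℕ),
    (1 : ℝ) / ((2 * ((i : ℝ) + 1)) * (2 * ((i : ℝ) + (j : ℝ) + 2) - 1) ^ m)

/-!
Write `T(a) T(b)` as a double sum over odd `m, n`. For fixed `m, n` the alternating sum over `j`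
telescopes by the partial fraction `1/(n (m+n)) = (1/n - 1/(m+n))/m`, leaving the odd
Mordell–Tornheim sum `∑ 1/(m^k n^l (m+n))`, which is symmetric in `k, l` and cancels in the
theorem, and the boundary term `∑ 1/(m^(k+l-1) n (m+n))` together with `T(1) T(k+l)`. In the
boundary term the sum over `n` is `(log 2 + H_m / 2) / m` with `H_m` the harmonic number, and
`∑ H_m / m^(k+l)` reindexes to `S(1, k+l) / 2`, while the `log 2` part cancels `T(1) T(k+l)`.
-/

open Filter Finset Real Topology

noncomputable def oddNum (n : ℕ) : ℝ := 2 * n + 1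

lemma oddNum_pos (n : ℕ) : 0 < oddNum n := by unfold oddNum; positivity

lemma summable_one_div_oddNum_pow {s : ℕ} (hs : 2 ≤ s) :
    Summable fun n : ℕ => 1 / oddNum n ^ s := by
  have hinj : Function.Injective fun n : ℕ => 2 * n + 1 := fun a b h => by simp_all
  refine ((Real.summable_one_div_nat_pow.mpr hs).comp_injective hinj).congr fun n => ?_
  simp [oddNum]

lemma Tval_eq_two_mul_tsum {s : ℕ} (hs : 2 ≤ s) : Tval s = 2 * ∑' n : ℕ, 1 / oddNum n ^ s := by
  rw [Tval, if_neg (by omega)]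
  rfl

lemma summable_one_div_oddNum_pow_mul_pow {a b : ℕ} (ha : 2 ≤ a) (hb : 2 ≤ b) :
    Summable fun p : ℕ × ℕ => 1 / (oddNum p.1 ^ a * oddNum p.2 ^ b) := by
  refine ((summable_one_div_oddNum_pow ha).mul_of_nonneg (summable_one_div_oddNum_pow hb)
    (fun n => (one_div_pos.mpr (pow_pos (oddNum_pos n) a)).le)
    (fun n => (one_div_pos.mpr (pow_pos (oddNum_pos n) b)).le)).congr fun p => ?_
  rw [div_mul_div_comm, one_mul]

lemma Tval_mul_Tval {a b : ℕ} (ha : 2 ≤ a) (hb : 2 ≤ b) :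
    Tval a * Tval b = 4 * ∑' p : ℕ × ℕ, 1 / (oddNum p.1 ^ a * oddNum p.2 ^ b) := by
  have h := (summable_one_div_oddNum_pow ha).tsum_mul_tsum (summable_one_div_oddNum_pow hb)
    ((summable_one_div_oddNum_pow_mul_pow ha hb).congr fun p => by rw [div_mul_div_comm, one_mul])
  simp only [div_mul_div_comm, one_mul] at h
  rw [Tval_eq_two_mul_tsum ha, Tval_eq_two_mul_tsum hb, ← h]
  ring

noncomputable def tornheimOddTerm (a b : ℕ) (p : ℕ × ℕ) : ℝ :=
  1 / (oddNum p.1 ^ a * oddNum p.2 ^ b * (oddNum p.1 + oddNum p.2))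

noncomputable def tornheimOdd (a b : ℕ) : ℝ := ∑' p : ℕ × ℕ, tornheimOddTerm a b p

lemma summable_tornheimOddTerm {a b : ℕ} (ha : 2 ≤ a) (hb : 1 ≤ b) :
    Summable (tornheimOddTerm a b) := by
  refine (summable_one_div_oddNum_pow_mul_pow ha (by omega : 2 ≤ b + 1)).of_nonneg_of_le
    (fun p => ?_) (fun p => ?_)
  · have := oddNum_pos p.1; have := oddNum_pos p.2
    unfold tornheimOddTerm; positivity
  · have h1 := oddNum_pos p.1; have h2 := oddNum_pos p.2
    unfold tornheimOddTerm
    apply one_div_le_one_div_of_le (by positivity)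
    rw [pow_succ, ← mul_assoc]
    gcongr
    linarith

lemma tornheimOdd_comm (a b : ℕ) : tornheimOdd a b = tornheimOdd b a := by
  rw [tornheimOdd, ← (Equiv.prodComm ℕ ℕ).tsum_eq]
  refine tsum_congr fun p => ?_
  simp only [tornheimOddTerm, Equiv.prodComm_apply, Prod.fst_swap, Prod.snd_swap]
  ring

lemma sum_Ico_alternating_div_pow_mul_pow {K : Type*} [Field K] {M N : K}
    (hM : M ≠ 0) (hN : N ≠ 0) (hMN : M + N ≠ 0) (k : ℕ) {l : ℕ} (hl : 1 ≤ l) :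
    ∑ j ∈ Ico 1 l, (-1) ^ (j - 1) / (M ^ (k + j) * N ^ (l + 1 - j))
      = 1 / (M ^ k * N ^ l * (M + N)) - (-1) ^ (l - 1) / (M ^ (k + l - 1) * N * (M + N)) := by
  induction l, hl using Nat.le_induction with
  | base => simp
  | succ l hl ih =>
    have hshift : ∀ j ∈ Ico 1 l, (-1 : K) ^ (j - 1) / (M ^ (k + j) * N ^ (l + 1 + 1 - j))
        = N⁻¹ * ((-1) ^ (j - 1) / (M ^ (k + j) * N ^ (l + 1 - j))) := by
      intro j hj
      rw [show l + 1 + 1 - j = l + 1 - j + 1 by grind, pow_succ]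
      field_simp
    obtain ⟨l, rfl⟩ : ∃ l', l = l' + 1 := ⟨l - 1, by omega⟩
    rw [sum_Ico_succ_top hl, sum_congr rfl hshift, ← mul_sum, ih]
    simp only [Nat.add_sub_cancel, show k + (l + 1 + 1) - 1 = k + l + 1 by omega,
      show k + (l + 1) - 1 = k + l by omega, show l + 1 + 1 + 1 - (l + 1) = 2 by omega, pow_succ]
    field_simp
    ring

lemma tendsto_harmonic_sub_harmonic {a : ℕ → ℕ} (ha : Tendsto a atTop atTop) {c : ℝ} (hc : 0 < c)
    (hratio : Tendsto (fun N : ℕ => ((a N : ℝ) + 1) / (N + 1)) atTop (𝓝 c)) :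
    Tendsto (fun N => (harmonic (a N) : ℝ) - harmonic N) atTop (𝓝 (log c)) := by
  have hγ := ((tendsto_eulerMascheroniSeq.comp ha).sub tendsto_eulerMascheroniSeq).add
    ((continuousAt_log hc.ne').tendsto.comp hratio)
  rw [sub_self, zero_add] at hγ
  refine hγ.congr fun N => ?_
  simp only [Function.comp_apply, eulerMascheroniSeq]
  rw [log_div (by positivity) (by positivity)]
  ring

lemma tendsto_harmonic_two_mul_sub_harmonic :
    Tendsto (fun N : ℕ => (harmonic (2 * N) : ℝ) - harmonic N) atTop (𝓝 (log 2)) := by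
  refine tendsto_harmonic_sub_harmonic (tendsto_id.const_mul_atTop' two_pos) two_pos ?_
  have h := (tendsto_one_div_add_atTop_nhds_zero_nat (𝕜 := ℝ)).const_sub 2
  rw [sub_zero] at h
  refine h.congr fun N => ?_
  simp only [id]
  push_cast
  field_simp
  ring

lemma tendsto_harmonic_add_sub_harmonic (m : ℕ) :
    Tendsto (fun N : ℕ => (harmonic (N + m) : ℝ) - harmonic N) atTop (𝓝 0) := by
  rw [← log_one]
  refine tendsto_harmonic_sub_harmonic (tendsto_add_atTop_nat m) one_pos ?_
  have h := ((tendsto_one_div_add_atTop_nhds_zero_nat (𝕜 := ℝ)).const_mul (m : ℝ)).const_add 1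
  rw [mul_zero, add_zero] at h
  refine h.congr fun N => ?_
  push_cast
  field_simp
  ring

lemma sum_range_one_div_oddNum_sub (m N : ℕ) :
    ∑ n ∈ range N, (1 / oddNum n - 1 / (oddNum m + oddNum n))
      = (harmonic (2 * N) - harmonic N : ℝ) - (harmonic (N + m) - harmonic N : ℝ) / 2
        + harmonic m / 2 := by
  induction N with
  | zero => simp
  | succ N ih =>
    rw [sum_range_succ, ih, show 2 * (N + 1) = 2 * N + 1 + 1 by ring,
      show N + 1 + m = N + m + 1 by ring]
    simp only [harmonic_succ]
    simp only [oddNum]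
    push_cast
    field_simp
    ring

lemma hasSum_one_div_oddNum_sub (m : ℕ) :
    HasSum (fun n => 1 / oddNum n - 1 / (oddNum m + oddNum n)) (log 2 + harmonic m / 2) := by
  have hnonneg : ∀ n, 0 ≤ 1 / oddNum n - 1 / (oddNum m + oddNum n) := fun n =>
    sub_nonneg.mpr (one_div_le_one_div_of_le (oddNum_pos n) (by linarith [oddNum_pos m]))
  rw [hasSum_iff_tendsto_nat_of_nonneg hnonneg]
  simp only [sum_range_one_div_oddNum_sub]
  convert (tendsto_harmonic_two_mul_sub_harmonic.sub
    ((tendsto_harmonic_add_sub_harmonic m).div_const 2)).add_const ((harmonic m : ℝ) / 2) using 2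
  simp

lemma tsum_tornheimOddTerm_one (a m : ℕ) :
    ∑' n, tornheimOddTerm a 1 (m, n) = (log 2 + harmonic m / 2) / oddNum m ^ (a + 1) := by
  have hm := (oddNum_pos m).ne'
  rw [div_eq_mul_one_div, mul_comm,
    ← ((hasSum_one_div_oddNum_sub m).mul_left (1 / oddNum m ^ (a + 1))).tsum_eq]
  refine tsum_congr fun n => ?_
  have hn := (oddNum_pos n).ne'
  have hmn := (add_pos (oddNum_pos m) (oddNum_pos n)).ne'
  simp only [tornheimOddTerm]
  field_simp
  ring

lemma harmonic_nonneg (m : ℕ) : (0 : ℝ) ≤ harmonic m := by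
  rw [harmonic]
  push_cast
  positivity

lemma harmonic_le_oddNum (m : ℕ) : (harmonic m : ℝ) ≤ oddNum m := by
  have hm := Nat.cast_nonneg (α := ℝ) m
  have := log_le_self hm
  linarith [harmonic_le_one_add_log m, show oddNum m = 2 * m + 1 from rfl]

lemma summable_harmonic_div_oddNum_pow {s : ℕ} (hs : 3 ≤ s) :
    Summable fun m => (harmonic m : ℝ) / oddNum m ^ s := by
  obtain ⟨t, rfl⟩ : ∃ t, s = t + 1 := ⟨s - 1, by omega⟩
  refine (summable_one_div_oddNum_pow (by omega : 2 ≤ t)).of_nonneg_of_le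
    (fun m => div_nonneg (harmonic_nonneg m) (pow_pos (oddNum_pos m) _).le)
    (fun m => ?_)
  have hm := oddNum_pos m
  calc (harmonic m : ℝ) / oddNum m ^ (t + 1) ≤ oddNum m / oddNum m ^ (t + 1) := by
        gcongr; exact harmonic_le_oddNum m
    _ = 1 / oddNum m ^ t := by field_simp; ring

lemma S1_eq_two_mul_tsum_harmonic {s : ℕ} (hs : 3 ≤ s) :
    S1 s = 2 * ∑' m, (harmonic m : ℝ) / oddNum m ^ s := by
  -- `g m q` is the `S1 s` summand at `i = q`, `j = m - q - 1`, where `2 (i + j + 2) - 1 = oddNum m`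
  set g : ℕ → ℕ → ℝ := fun m q => if q < m then 1 / (2 * ((q : ℝ) + 1) * oddNum m ^ s) else 0
  have hrow : ∀ m, ∑' q, g m q = (harmonic m : ℝ) / oddNum m ^ s / 2 := by
    intro m
    rw [tsum_eq_sum (s := range m) fun q hq => if_neg (by simpa using hq), harmonic]
    push_cast
    rw [sum_div, sum_div]
    refine sum_congr rfl fun q hq => ?_
    rw [if_pos (mem_range.mp hq)]
    field_simp
  have hg : Summable (Function.uncurry g) := by
    refine (summable_prod_of_nonneg fun p => ?_).mpr ⟨fun m => ?_, ?_⟩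
    · have := oddNum_pos p.1
      simp only [Function.uncurry, g, Pi.zero_apply]
      split_ifs <;> positivity
    · exact summable_of_ne_finset_zero (s := range m) fun q hq => if_neg (by simpa using hq)
    · simp only [Function.uncurry_apply_pair, hrow]
      exact (summable_harmonic_div_oddNum_pow hs).div_const 2
  have hcol : ∀ q : ℕ, ∑' j : ℕ, 1 / (2 * ((q : ℝ) + 1) * (2 * ((q : ℝ) + (j : ℝ) + 2) - 1) ^ s)
      = ∑' m, g m q := by
    intro q
    have hq : Summable fun m => g m q := hg.prod_symm.prod_factor q
    rw [← hq.sum_add_tsum_nat_add (q + 1),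
      sum_eq_zero fun m hm => if_neg (by rw [mem_range] at hm; omega), zero_add]
    refine tsum_congr fun j => ?_
    simp only [g, if_pos (by omega : q < j + (q + 1)), oddNum]
    push_cast
    ring_nf
  rw [S1, tsum_congr hcol, hg.tsum_comm, tsum_congr hrow, tsum_div_const]
  ring

lemma four_mul_tornheimOdd_one {a : ℕ} (ha : 2 ≤ a) :
    4 * tornheimOdd a 1 = Tval 1 * Tval (a + 1) + S1 (a + 1) := by
  have hsplit : ∀ m, (log 2 + harmonic m / 2) / oddNum m ^ (a + 1)
      = log 2 * (1 / oddNum m ^ (a + 1)) + (harmonic m / oddNum m ^ (a + 1)) / 2 := fun m => by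
    ring
  rw [tornheimOdd, (summable_tornheimOddTerm ha le_rfl).tsum_prod,
    tsum_congr (tsum_tornheimOddTerm_one a), tsum_congr hsplit,
    ((summable_one_div_oddNum_pow (by omega)).mul_left _).tsum_add
      ((summable_harmonic_div_oddNum_pow (by omega)).div_const 2),
    tsum_mul_left, tsum_div_const, Tval, if_pos rfl, Tval_eq_two_mul_tsum (by omega),
    S1_eq_two_mul_tsum_harmonic (by omega)]
  ring

lemma sum_Ico_alternating_Tval_mul_Tval {k l : ℕ} (hk : 2 ≤ k) (hl : 1 ≤ l) :
    ∑ j ∈ Ico 1 l, (-1 : ℝ) ^ (j - 1) * Tval (l + 1 - j) * Tval (k + j)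
      = 4 * tornheimOdd k l - 4 * (-1) ^ (l - 1) * tornheimOdd (k + l - 1) 1 := by
  have hterm : ∀ j ∈ Ico 1 l, (-1 : ℝ) ^ (j - 1) * Tval (l + 1 - j) * Tval (k + j)
      = ∑' p : ℕ × ℕ, 4 * ((-1) ^ (j - 1) / (oddNum p.1 ^ (k + j) * oddNum p.2 ^ (l + 1 - j))) := by
    intro j hj
    have hj := mem_Ico.mp hj
    rw [mul_assoc, mul_comm (Tval _), Tval_mul_Tval (by omega) (by omega), ← tsum_mul_left,
      ← tsum_mul_left]
    exact tsum_congr fun p => by ring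
  have hpartial : ∀ p : ℕ × ℕ,
      ∑ j ∈ Ico 1 l, 4 * ((-1 : ℝ) ^ (j - 1) / (oddNum p.1 ^ (k + j) * oddNum p.2 ^ (l + 1 - j)))
        = 4 * tornheimOddTerm k l p - 4 * (-1) ^ (l - 1) * tornheimOddTerm (k + l - 1) 1 p := by
    intro p
    rw [← mul_sum, sum_Ico_alternating_div_pow_mul_pow (oddNum_pos _).ne' (oddNum_pos _).ne'
      (add_pos (oddNum_pos _) (oddNum_pos _)).ne' k hl, tornheimOddTerm, tornheimOddTerm, pow_one]
    ring
  have hsummable : ∀ j ∈ Ico 1 l, Summable fun p : ℕ × ℕ =>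
      4 * ((-1 : ℝ) ^ (j - 1) / (oddNum p.1 ^ (k + j) * oddNum p.2 ^ (l + 1 - j))) := by
    intro j hj
    have hj := mem_Ico.mp hj
    simp only [div_eq_mul_one_div ((-1 : ℝ) ^ (j - 1))]
    exact ((summable_one_div_oddNum_pow_mul_pow (by omega) (by omega)).mul_left _).mul_left 4
  rw [sum_congr rfl hterm, ← Summable.tsum_finsetSum hsummable, tsum_congr hpartial,
    ((summable_tornheimOddTerm hk hl).mul_left 4).tsum_sub
      ((summable_tornheimOddTerm (by omega) le_rfl).mul_left _), tsum_mul_left, tsum_mul_left,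
    tornheimOdd, tornheimOdd]

lemma sum_Icc_alternating_Tval_mul_Tval {k l : ℕ} (hk : 2 ≤ k) (hl : 1 ≤ l) :
    ∑ j ∈ Icc 1 l, (-1 : ℝ) ^ (j - 1) * Tval (l + 1 - j) * Tval (k + j)
      = 4 * tornheimOdd k l + (-1) ^ l * S1 (k + l) := by
  have hcore := four_mul_tornheimOdd_one (a := k + l - 1) (by omega)
  rw [show k + l - 1 + 1 = k + l by omega] at hcore
  obtain ⟨l, rfl⟩ : ∃ l', l = l' + 1 := ⟨l - 1, by omega⟩
  rw [← Ico_add_one_right_eq_Icc, sum_Ico_succ_top hl, sum_Ico_alternating_Tval_mul_Tval hk hl,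
    Nat.add_sub_cancel, show l + 1 + 1 - (l + 1) = 1 by omega, pow_succ]
  linear_combination (-(-1 : ℝ) ^ l) * hcore

theorem stmt11 (k l : ℕ) (hk : 2 ≤ k) (hl : 2 ≤ l) :
    ((-1 : ℝ) ^ l - (-1 : ℝ) ^ k) * S1 (k + l)
      = (∑ j ∈ Finset.Icc 1 l, (-1 : ℝ) ^ (j - 1) * Tval (l + 1 - j) * Tval (k + j))
        + ∑ j ∈ Finset.Icc 1 k, (-1 : ℝ) ^ j * Tval (k + 1 - j) * Tval (l + j) := by
  have hflip : ∀ j ∈ Icc 1 k, (-1 : ℝ) ^ j * Tval (k + 1 - j) * Tval (l + j)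
      = -((-1) ^ (j - 1) * Tval (k + 1 - j) * Tval (l + j)) := by
    intro j hj
    obtain ⟨i, rfl⟩ : ∃ i, j = i + 1 := ⟨j - 1, by grind⟩
    rw [Nat.add_sub_cancel, pow_succ]
    ring
  rw [sum_congr rfl hflip, sum_neg_distrib, sum_Icc_alternating_Tval_mul_Tval hk (by omega),
    sum_Icc_alternating_Tval_mul_Tval hl (by omega), tornheimOdd_comm l k, add_comm l k]
  ring
end

section
/- For every positive integer p, S(1, 2p+1) = ∑_{j=0}^{p-1} (-1)^{j-1} T(2p+1-j) T(j+1) - (-1)^p T(p+1)²/2, where T(1) := 2 log 2, T(s) := 2∑_{m≥1} 1/(2m-1)^s for s ≥ 2, and S(1,m) := 4∑_{0<i<j} 1/((2i)(2j-1)^m). -/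
/-!
Partial fractions give, for `x, y > 0`,
`∑_{j=0}^{2p} (-1)^(j+1) x^-(j+1) y^-(2p+1-j) = -(x^-(2p+1) + y^-(2p+1)) / (x + y)`.
Summing over `x = 2a+1`, `y = 2b+1` with `a, b < N` and using
`∑_{b<N} 1/(2a+2b+2) = (H_{a+N} - H_a)/2` turns the alternating convolution of the truncated
odd power sums into `∑_{a<N} (H_a - H_{a+N}) / (2a+1)^(2p+1)`. The factor `∑_{n<N} 1/(2n+1)`
diverges, but regularising `2 ∑_{n<N} 1/(2n+1)` to `2 ∑_{n<N} 1/(2n+1) - H_N = 2 (H_{2N} - H_N)`,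
which tends to `2 log 2 = T(1)`, cancels exactly the `H_N` in `H_{a+N} = H_N + (H_{a+N} - H_N)`.
The remaining tail is `O(1/N)`, while `∑_a H_a / (2a+1)^(2p+1) = S(1,2p+1)/2`. Hence
`S(1,2p+1) = ½ ∑_{j=0}^{2p} (-1)^(j+1) T(j+1) T(2p+1-j)`, and pairing `j` with `2p-j` gives the
claim.
-/

open Finset Filter Topology

theorem sum_neg_one_pow_mul_one_div_pow_mul_one_div_pow {K : Type*} [Field K] (n : ℕ) {a b : K}
    (ha : a ≠ 0) (hb : b ≠ 0) (hab : a + b ≠ 0) :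
    ∑ j ∈ range n, (-1) ^ (j + 1) * (1 / a ^ (j + 1)) * (1 / b ^ (n - j))
      = ((-1) ^ n / a ^ n - 1 / b ^ n) / (a + b) := by
  have hterm : ∀ j ∈ range n, (-1) ^ (j + 1) * (1 / a ^ (j + 1)) * (1 / b ^ (n - j))
      = -((-a⁻¹) ^ j * b⁻¹ ^ (n - 1 - j)) * (a * b)⁻¹ := by
    intro j hj
    rw [show n - j = n - 1 - j + 1 by have := mem_range.mp hj; omega,
      neg_pow a⁻¹, inv_pow, inv_pow]
    field_simp
    ring
  rw [eq_div_iff hab, sum_congr rfl hterm, ← sum_mul, sum_neg_distrib]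
  calc -(∑ j ∈ range n, (-a⁻¹) ^ j * b⁻¹ ^ (n - 1 - j)) * (a * b)⁻¹ * (a + b)
      = (∑ j ∈ range n, (-a⁻¹) ^ j * b⁻¹ ^ (n - 1 - j)) * (-a⁻¹ - b⁻¹) := by
        field_simp
        ring
    _ = (-1) ^ n / a ^ n - 1 / b ^ n := by
        rw [geom_sum₂_mul, neg_pow, inv_pow, inv_pow]
        ring

theorem sum_sum_add_div_add {ι : Type*} (s : Finset ι) (u x : ι → ℝ) :
    ∑ a ∈ s, ∑ b ∈ s, (u a + u b) / (x a + x b)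
      = 2 * ∑ a ∈ s, ∑ b ∈ s, u a / (x a + x b) := by
  simp_rw [add_div, sum_add_distrib]
  rw [sum_comm (f := fun a b => u b / (x a + x b))]
  simp_rw [add_comm (x _) (x _)]
  ring

theorem sum_range_two_mul_add_one_of_symm {M : Type*} [AddCommMonoid M] (f : ℕ → M) (p : ℕ)
    (hf : ∀ j ≤ 2 * p, f (2 * p - j) = f j) :
    ∑ j ∈ range (2 * p + 1), f j = 2 • ∑ j ∈ range p, f j + f p := by
  have hreflect : ∑ k ∈ range p, f (p + 1 + k) = ∑ j ∈ range p, f j := by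
    rw [← sum_range_reflect]
    refine sum_congr rfl fun j hj => ?_
    have hj := mem_range.mp hj
    rw [show p + 1 + (p - 1 - j) = 2 * p - j by omega, hf j (by omega)]
  rw [show 2 * p + 1 = p + 1 + p by ring, sum_range_add, sum_range_succ, hreflect, two_nsmul]
  abel

noncomputable def altConv (T : ℕ → ℝ) (p : ℕ) : ℝ :=
  ∑ j ∈ range (2 * p + 1), (-1 : ℝ) ^ (j + 1) * T (j + 1) * T (2 * p + 1 - j)

theorem altConv_div_two (T : ℕ → ℝ) (p : ℕ) :
    altConv T p / 2 = ∑ j ∈ range p, (-1 : ℝ) ^ (j + 1) * T (2 * p + 1 - j) * T (j + 1)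
      - (-1 : ℝ) ^ p * T (p + 1) ^ 2 / 2 := by
  rw [altConv, sum_range_two_mul_add_one_of_symm _ p fun j hj => ?symm]
  case symm =>
    have hsign : (-1 : ℝ) ^ (2 * p - j + 1) = (-1) ^ (j + 1) :=
      neg_one_pow_congr (by simp [Nat.even_add_one, Nat.even_sub hj, parity_simps])
    rw [hsign, show 2 * p - j + 1 = 2 * p + 1 - j by omega,
      show 2 * p + 1 - (2 * p - j) = j + 1 by omega]
    ring
  rw [show 2 * p + 1 - p = p + 1 by omega, nsmul_eq_mul, pow_succ]
  simp_rw [mul_right_comm _ (T (_ + 1))]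
  ring

theorem harmonic_add_sub_harmonic (a N : ℕ) :
    (harmonic (a + N) : ℝ) - harmonic a = ∑ b ∈ range N, 1 / ((a : ℝ) + b + 1) := by
  induction N with
  | zero => simp
  | succ N ih =>
    rw [← add_assoc, harmonic_succ, sum_range_succ, ← ih]
    push_cast
    ring

theorem harmonic_add_sub_harmonic_le (a N : ℕ) :
    (harmonic (a + N) : ℝ) - harmonic N ≤ a / (N + 1) := by
  rw [add_comm, harmonic_add_sub_harmonic]
  calc ∑ b ∈ range a, 1 / ((N : ℝ) + b + 1) ≤ ∑ b ∈ range a, 1 / ((N : ℝ) + 1) :=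
        sum_le_sum fun b _ => by gcongr; simp
    _ = a / (N + 1) := by simp [div_eq_mul_inv]

theorem sum_one_div_two_mul_add_one_add (a N : ℕ) :
    ∑ b ∈ range N, 1 / ((2 * (a : ℝ) + 1) + (2 * b + 1))
      = ((harmonic (a + N) : ℝ) - harmonic a) / 2 := by
  rw [harmonic_add_sub_harmonic, sum_div]
  refine sum_congr rfl fun b _ => ?_
  field_simp
  ring

theorem sum_range_one_div_two_mul_succ_mul (a : ℕ) (c : ℝ) :
    ∑ k ∈ range a, 1 / ((2 * ((k : ℝ) + 1)) * c) = (harmonic a : ℝ) / c / 2 := by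
  rw [harmonic, Rat.cast_sum, sum_div, sum_div]
  refine sum_congr rfl fun k _ => ?_
  push_cast
  field_simp

noncomputable def oddPowSum (s N : ℕ) : ℝ := ∑ n ∈ range N, 1 / (2 * (n : ℝ) + 1) ^ s

theorem summable_one_div_two_mul_add_one_pow {s : ℕ} (hs : 2 ≤ s) :
    Summable fun n : ℕ => 1 / (2 * (n : ℝ) + 1) ^ s := by
  have hshift : Summable fun n : ℕ => 1 / ((n + 1 : ℕ) : ℝ) ^ s :=
    (summable_nat_add_iff 1).mpr (Real.summable_one_div_nat_pow.mpr (by omega))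
  refine hshift.of_nonneg_of_le (fun n => by positivity) fun n => ?_
  gcongr
  push_cast
  linarith [(n.cast_nonneg : (0 : ℝ) ≤ n)]

theorem harmonic_two_mul (N : ℕ) : (harmonic (2 * N) : ℝ) = oddPowSum 1 N + harmonic N / 2 := by
  induction N with
  | zero => simp [oddPowSum]
  | succ N ih =>
    rw [show 2 * (N + 1) = 2 * N + 1 + 1 by ring, harmonic_succ, harmonic_succ, harmonic_succ,
      oddPowSum, sum_range_succ, ← oddPowSum]
    push_cast
    rw [ih]
    field_simp
    ring

theorem tendsto_two_mul_oddPowSum_one_sub_harmonic :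
    Tendsto (fun N => 2 * oddPowSum 1 N - harmonic N) atTop (𝓝 (2 * Real.log 2)) := by
  have hdouble : Tendsto (fun N : ℕ => (harmonic (2 * N) : ℝ) - Real.log (2 * N)) atTop
      (𝓝 Real.eulerMascheroniConstant) := by
    refine (Real.tendsto_harmonic_sub_log.comp (tendsto_id.const_mul_atTop' two_pos)).congr
      fun N => ?_
    simp
  have hlim := ((hdouble.sub Real.tendsto_harmonic_sub_log).add_const (Real.log 2)).const_mul 2
  rw [sub_self, zero_add] at hlim
  refine hlim.congr' ?_
  filter_upwards [eventually_ne_atTop 0] with N hN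
  rw [Real.log_mul two_ne_zero (by exact_mod_cast hN), harmonic_two_mul]
  ring

noncomputable def Tpartial (s N : ℕ) : ℝ :=
  2 * oddPowSum s N - if s = 1 then (harmonic N : ℝ) else 0

theorem tendsto_Tpartial {s : ℕ} (hs : 1 ≤ s) : Tendsto (Tpartial s) atTop (𝓝 (Tval s)) := by
  unfold Tpartial Tval
  split_ifs with h
  · subst h
    exact tendsto_two_mul_oddPowSum_one_sub_harmonic
  · have hs2 : 2 ≤ s := by omega
    simpa [oddPowSum] using
      ((summable_one_div_two_mul_add_one_pow hs2).hasSum.tendsto_sum_nat).const_mul 2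

theorem altConv_oddPowSum (p N : ℕ) :
    altConv (oddPowSum · N) p
      = ∑ a ∈ range N, ((harmonic a : ℝ) - harmonic (a + N)) / (2 * a + 1) ^ (2 * p + 1) := by
  set u : ℕ → ℝ := fun n => 1 / (2 * (n : ℝ) + 1) ^ (2 * p + 1)
  set x : ℕ → ℝ := fun n => 2 * (n : ℝ) + 1
  have hinner : ∀ a,
      ∑ b ∈ range N, 1 / (x a + x b) = ((harmonic (a + N) : ℝ) - harmonic a) / 2 :=
    fun a => sum_one_div_two_mul_add_one_add a N
  calc altConv (oddPowSum · N) p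
      = ∑ a ∈ range N, ∑ b ∈ range N, ∑ j ∈ range (2 * p + 1),
          (-1 : ℝ) ^ (j + 1) * (1 / x a ^ (j + 1)) * (1 / x b ^ (2 * p + 1 - j)) := by
        simp_rw [altConv, oddPowSum, mul_assoc, sum_mul_sum, mul_sum]
        rw [sum_comm]
        exact sum_congr rfl fun a _ => sum_comm
    _ = ∑ a ∈ range N, ∑ b ∈ range N, -((u a + u b) / (x a + x b)) := by
        refine sum_congr rfl fun a _ => sum_congr rfl fun b _ => ?_
        rw [sum_neg_one_pow_mul_one_div_pow_mul_one_div_pow _ (by positivity) (by positivity)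
          (by positivity), Odd.neg_one_pow ⟨p, rfl⟩]
        ring
    _ = -(2 * ∑ a ∈ range N, u a * ∑ b ∈ range N, 1 / (x a + x b)) := by
        simp_rw [sum_neg_distrib, sum_sum_add_div_add, mul_sum, mul_one_div]
    _ = ∑ a ∈ range N, ((harmonic a : ℝ) - harmonic (a + N)) / (2 * a + 1) ^ (2 * p + 1) := by
        simp_rw [hinner, mul_sum, ← sum_neg_distrib]
        refine sum_congr rfl fun a _ => ?_
        simp only [u]
        ring

theorem altConv_Tpartial {p : ℕ} (hp : 0 < p) (N : ℕ) :
    altConv (Tpartial · N) p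
      = 4 * (altConv (oddPowSum · N) p + harmonic N * oddPowSum (2 * p + 1) N) := by
  obtain ⟨q, rfl⟩ : ∃ q, p = q + 1 := ⟨p - 1, by omega⟩
  have hsplit : ∀ f : ℕ → ℝ, ∑ j ∈ range (2 * (q + 1) + 1), f j
      = f 0 + ∑ i ∈ range (2 * q + 1), f (i + 1) + f (2 * q + 2) := by
    intro f
    rw [show 2 * (q + 1) + 1 = 2 * q + 1 + 1 + 1 by ring, sum_range_succ, sum_range_succ']
    abel
  have hmid : ∀ i ∈ range (2 * q + 1),
      (-1 : ℝ) ^ (i + 1 + 1) * Tpartial (i + 1 + 1) N * Tpartial (2 * (q + 1) + 1 - (i + 1)) N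
        = 4 * ((-1 : ℝ) ^ (i + 1 + 1) * oddPowSum (i + 1 + 1) N
            * oddPowSum (2 * (q + 1) + 1 - (i + 1)) N) := by
    intro i hi
    have hi := mem_range.mp hi
    rw [Tpartial, Tpartial, if_neg (by omega), if_neg (by omega)]
    ring
  rw [altConv, altConv, hsplit, hsplit, sum_congr rfl hmid, ← mul_sum,
    show 2 * (q + 1) + 1 - (2 * q + 2) = 1 by omega, Nat.sub_zero,
    Odd.neg_one_pow (n := 2 * q + 2 + 1) ⟨q + 1, by ring⟩,
    show 2 * q + 2 + 1 = 2 * (q + 1) + 1 by ring]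
  simp only [Tpartial, zero_add, if_true, if_neg (show 2 * (q + 1) + 1 ≠ 1 by omega)]
  ring

noncomputable def S1term (m : ℕ) (x : ℕ × ℕ) : ℝ :=
  1 / ((2 * ((x.1 : ℝ) + 1)) * (2 * ((x.1 : ℝ) + (x.2 : ℝ) + 2) - 1) ^ m)

theorem summable_one_div_nat_add_one_sq : Summable fun n : ℕ => 1 / ((n : ℝ) + 1) ^ 2 := by
  simpa using (summable_nat_add_iff 1).mpr (Real.summable_one_div_nat_pow.mpr one_lt_two)

theorem summable_S1term {m : ℕ} (hm : 3 ≤ m) : Summable (S1term m) := by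
  have hbound : ∀ i j : ℕ,
      0 ≤ S1term m (i, j)
        ∧ S1term m (i, j) ≤ 1 / ((i : ℝ) + 1) ^ 2 * (1 / ((j : ℝ) + 1) ^ 2) := by
    intro i j
    have hi : (0 : ℝ) ≤ i := i.cast_nonneg
    have hj : (0 : ℝ) ≤ j := j.cast_nonneg
    simp only [S1term]
    set X : ℝ := 2 * ((i : ℝ) + j + 2) - 1
    have hXi : (i : ℝ) + 1 ≤ X := by linarith
    have hXj : (j : ℝ) + 1 ≤ X := by linarith
    have hX1 : 1 ≤ X := by linarith
    refine ⟨by positivity, ?_⟩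
    rw [one_div_mul_one_div]
    refine one_div_le_one_div_of_le (by positivity) ?_
    calc ((i : ℝ) + 1) ^ 2 * ((j : ℝ) + 1) ^ 2
        = ((i : ℝ) + 1) * (((i : ℝ) + 1) * ((j : ℝ) + 1) ^ 2) := by ring
      _ ≤ ((i : ℝ) + 1) * (2 * X ^ m) := by
          refine mul_le_mul_of_nonneg_left ?_ (by positivity)
          calc ((i : ℝ) + 1) * ((j : ℝ) + 1) ^ 2 ≤ X * X ^ 2 := by gcongr
            _ = X ^ 3 := by ring
            _ ≤ X ^ m := pow_le_pow_right₀ hX1 hm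
            _ ≤ 2 * X ^ m := by linarith [pow_pos (show 0 < X by linarith) m]
      _ = 2 * ((i : ℝ) + 1) * X ^ m := by ring
  exact (summable_one_div_nat_add_one_sq.mul_of_nonneg summable_one_div_nat_add_one_sq
    (fun _ => by positivity) (fun _ => by positivity)).of_nonneg_of_le
    (fun x => (hbound x.1 x.2).1) fun x => (hbound x.1 x.2).2

theorem hasSum_S1term {m : ℕ} (hm : 3 ≤ m) : HasSum (S1term m) (S1 m / 4) := by
  have hF := summable_S1term hm
  have hS1 : S1 m = 4 * ∑' (i : ℕ) (j : ℕ), S1term m (i, j) := rfl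
  rw [hS1, ← hF.tsum_prod' fun i => hF.prod_factor i, mul_div_cancel_left₀ _ four_ne_zero]
  exact hF.hasSum

theorem hasSum_S1term_of_lt {m : ℕ} (hm : 3 ≤ m) :
    HasSum (fun x : ℕ × ℕ =>
      if x.2 < x.1 then (1 : ℝ) / ((2 * ((x.2 : ℝ) + 1)) * (2 * x.1 + 1) ^ m) else 0)
      (S1 m / 4) := by
  set e : ℕ × ℕ → ℕ × ℕ := fun x => (x.1 + x.2 + 1, x.1)
  have he : Function.Injective e := by
    rintro ⟨i, j⟩ ⟨i', j'⟩ h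
    simp only [e, Prod.mk.injEq] at h
    ext <;> omega
  refine (he.hasSum_iff fun ⟨a, k⟩ hx => if_neg fun hka => hx ⟨(k, a - k - 1), ?_⟩).mp ?_
  · simp only at hka
    simp only [e, Prod.mk.injEq, and_true]
    omega
  convert hasSum_S1term hm using 1
  ext ⟨i, j⟩
  simp only [Function.comp, e, S1term, if_pos (show i < i + j + 1 by omega)]
  push_cast
  ring_nf

theorem hasSum_harmonic_div_two_mul_add_one_pow {m : ℕ} (hm : 3 ≤ m) :
    HasSum (fun a : ℕ => (harmonic a : ℝ) / (2 * a + 1) ^ m) (S1 m / 2) := by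
  have hfiber : ∀ a : ℕ, HasSum
      (fun k => if k < a then (1 : ℝ) / ((2 * ((k : ℝ) + 1)) * (2 * a + 1) ^ m) else 0)
      ((harmonic a : ℝ) / (2 * a + 1) ^ m / 2) := by
    intro a
    rw [← sum_range_one_div_two_mul_succ_mul,
      ← sum_congr rfl fun k hk => if_pos (mem_range.mp hk)]
    exact hasSum_sum_of_ne_finset_zero fun k hk => if_neg (by simpa using hk)
  have h := ((hasSum_S1term_of_lt hm).prod_fiberwise hfiber).mul_left 2
  rw [show 2 * (S1 m / 4) = S1 m / 2 by ring] at h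
  simpa only [mul_div_cancel₀ _ (two_ne_zero (α := ℝ))] using h

theorem harmonic_tail_div_pow_le {m : ℕ} (hm : 3 ≤ m) (a N : ℕ) :
    ((harmonic (a + N) : ℝ) - harmonic N) / (2 * a + 1) ^ m
      ≤ 1 / ((N : ℝ) + 1) * (1 / (2 * (a : ℝ) + 1) ^ 2) := by
  have ha : (0 : ℝ) ≤ a := a.cast_nonneg
  calc ((harmonic (a + N) : ℝ) - harmonic N) / (2 * a + 1) ^ m
      ≤ (a / ((N : ℝ) + 1)) / (2 * a + 1) ^ m := by
        gcongr
        exact harmonic_add_sub_harmonic_le a N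
    _ ≤ 1 / ((N : ℝ) + 1) * (1 / (2 * (a : ℝ) + 1) ^ 2) := by
        rw [div_div, one_div_mul_one_div, div_le_div_iff₀ (by positivity) (by positivity)]
        calc (a : ℝ) * (((N : ℝ) + 1) * (2 * a + 1) ^ 2)
            ≤ (2 * a + 1) * (((N : ℝ) + 1) * (2 * a + 1) ^ 2) := by gcongr; linarith
          _ = ((N : ℝ) + 1) * (2 * a + 1) ^ 3 := by ring
          _ ≤ ((N : ℝ) + 1) * (2 * a + 1) ^ m := by gcongr; linarith
          _ = 1 * (((N : ℝ) + 1) * (2 * a + 1) ^ m) := by ring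

theorem tendsto_sum_harmonic_tail_div_two_mul_add_one_pow {m : ℕ} (hm : 3 ≤ m) :
    Tendsto (fun N : ℕ =>
      ∑ a ∈ range N, ((harmonic (a + N) : ℝ) - harmonic N) / (2 * a + 1) ^ m) atTop (𝓝 0) := by
  set C : ℝ := ∑' n : ℕ, 1 / (2 * (n : ℝ) + 1) ^ 2
  have hnonneg : ∀ a N : ℕ, 0 ≤ (harmonic (a + N) : ℝ) - harmonic N := fun a N => by
    rw [add_comm, harmonic_add_sub_harmonic]
    positivity
  refine squeeze_zero (g := fun N : ℕ => 1 / ((N : ℝ) + 1) * C)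
    (fun N => sum_nonneg fun a _ => div_nonneg (hnonneg a N) (by positivity)) (fun N => ?_)
    (by simpa using tendsto_one_div_add_atTop_nhds_zero_nat.mul_const C)
  calc ∑ a ∈ range N, ((harmonic (a + N) : ℝ) - harmonic N) / (2 * a + 1) ^ m
      ≤ ∑ a ∈ range N, 1 / ((N : ℝ) + 1) * (1 / (2 * (a : ℝ) + 1) ^ 2) :=
        sum_le_sum fun a _ => harmonic_tail_div_pow_le hm a N
    _ ≤ 1 / ((N : ℝ) + 1) * C := by
        rw [← mul_sum]
        gcongr
        exact (summable_one_div_two_mul_add_one_pow le_rfl).sum_le_tsum _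
          fun n _ => by positivity

theorem S1_two_mul_add_one {p : ℕ} (hp : 0 < p) : S1 (2 * p + 1) = altConv Tval p / 2 := by
  have hT : Tendsto (fun N => altConv (Tpartial · N) p) atTop (𝓝 (altConv Tval p)) :=
    tendsto_finsetSum _ fun j hj => ((tendsto_Tpartial (by omega)).const_mul _).mul
      (tendsto_Tpartial (by have := mem_range.mp hj; omega))
  have hS : Tendsto (fun N =>
      4 * (∑ a ∈ range N, (harmonic a : ℝ) / (2 * a + 1) ^ (2 * p + 1)
        - ∑ a ∈ range N, ((harmonic (a + N) : ℝ) - harmonic N) / (2 * a + 1) ^ (2 * p + 1)))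
      atTop (𝓝 (4 * (S1 (2 * p + 1) / 2 - 0))) :=
    (((hasSum_harmonic_div_two_mul_add_one_pow (by omega)).tendsto_sum_nat).sub
      (tendsto_sum_harmonic_tail_div_two_mul_add_one_pow (by omega))).const_mul 4
  have hlim := tendsto_nhds_unique hT <| hS.congr fun N => by
    rw [altConv_Tpartial hp, altConv_oddPowSum, oddPowSum, mul_sum, ← sum_add_distrib,
      ← sum_sub_distrib]
    exact congrArg _ (sum_congr rfl fun a _ => by ring)
  rw [hlim]
  ring

theorem stmt12 (p : ℕ) (hp : 0 < p) :
    S1 (2 * p + 1)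
      = (∑ j ∈ Finset.range p, (-1 : ℝ) ^ (j + 1) * Tval (2 * p + 1 - j) * Tval (j + 1))
        - (-1 : ℝ) ^ p * Tval (p + 1) ^ 2 / 2 := by
  rw [S1_two_mul_add_one hp, altConv_div_two]
end

section
/- Depth-one duality at level one: for integers k, l, p with k, l ≥ 2 and p ≥ 1, ∫₀¹ Li_{k+p-1}(x) · Li_l(x) / x dx + (-1)^p ∫₀¹ Li_k(x) · Li_{l+p-1}(x) / x dx = ∑_{j=1}^{p-1} (-1)^{j-1} ζ(k+p-j) ζ(l+j). -/
/-!
Writing `I(a, b) = ∫₀¹ Li_a(x) Li_b(x) / x dx`, the relation `Li_{m+1}' = Li_m / x` turns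
integration by parts of `Li_{a+1} Li_{b+1}` over `[0, 1]` into
`I(a, b + 1) + I(a + 1, b) = ζ(a + 1) ζ(b + 1)`.
Iterating this `p - 1` times moves `p - 1` units of weight from the first index to the second,
alternating the sign of the remaining integral and producing one product of zeta values per step.
-/

/-- The classical polylogarithm `Li_m(x) = ∑_{n≥1} x^n / n^m`. -/
noncomputable def Li (m : ℕ) (x : ℝ) : ℝ := ∑' n : ℕ, x ^ (n + 1) / ((n : ℝ) + 1) ^ m

/-- Riemann zeta value `ζ(m) = ∑_{n≥1} 1/n^m`. -/
noncomputable def zetaVal (m : ℕ) : ℝ := ∑' n : ℕ, (1 : ℝ) / ((n : ℝ) + 1) ^ m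

open Set intervalIntegral

/-- `Li_m(x) / x`, extended continuously by its value `1` at `x = 0`. -/
noncomputable def LiDivId (m : ℕ) (x : ℝ) : ℝ := ∑' n : ℕ, x ^ n / ((n : ℝ) + 1) ^ m

lemma summable_one_div_succ_pow {m : ℕ} (hm : 1 < m) :
    Summable fun n : ℕ => (1 : ℝ) / ((n : ℝ) + 1) ^ m := by
  have := (summable_nat_add_iff 1).mpr (Real.summable_one_div_nat_pow.mpr hm)
  exact_mod_cast this

lemma norm_pow_div_succ_pow_le {x : ℝ} (hx : |x| ≤ 1) (m n : ℕ) :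
    ‖x ^ n / ((n : ℝ) + 1) ^ m‖ ≤ 1 / ((n : ℝ) + 1) ^ m := by
  rw [norm_div, norm_pow, norm_pow, Real.norm_eq_abs, Real.norm_of_nonneg (by positivity)]
  gcongr
  exact pow_le_one₀ (abs_nonneg x) hx

lemma Li_eq_mul_LiDivId (m : ℕ) (x : ℝ) : Li m x = x * LiDivId m x := by
  rw [Li, LiDivId, ← tsum_mul_left]
  congr 1 with n
  ring

lemma Li_zero_right (m : ℕ) : Li m 0 = 0 := by
  simp [Li_eq_mul_LiDivId]

lemma Li_one_right (m : ℕ) : Li m 1 = zetaVal m := by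
  simp [Li, zetaVal]

lemma continuousOn_LiDivId {m : ℕ} (hm : 1 < m) : ContinuousOn (LiDivId m) (Icc (-1) 1) :=
  continuousOn_tsum (fun n => by fun_prop) (summable_one_div_succ_pow hm)
    fun n _ hx => norm_pow_div_succ_pow_le (abs_le.mpr hx) m n

lemma continuousOn_Li {m : ℕ} (hm : 1 < m) : ContinuousOn (Li m) (Icc (-1) 1) :=
  (continuousOn_id.mul (continuousOn_LiDivId hm)).congr fun x _ => Li_eq_mul_LiDivId m x

lemma hasDerivAt_Li_succ {m : ℕ} (hm : 1 < m) {x : ℝ} (hx : x ∈ Ioo (-1) 1) :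
    HasDerivAt (Li (m + 1)) (LiDivId m x) x := by
  refine hasDerivAt_tsum_of_isPreconnected (summable_one_div_succ_pow hm) isOpen_Ioo
    (convex_Ioo (-1 : ℝ) 1).isPreconnected (fun n y _ => ?_)
    (fun n y hy => norm_pow_div_succ_pow_le (abs_lt.mpr hy).le m n)
    (y₀ := 0) (by norm_num) (by simp) hx
  refine ((hasDerivAt_pow (n + 1) y).div_const _).congr_deriv ?_
  rw [Nat.add_sub_cancel, Nat.cast_succ]
  field_simp
  ring

lemma Li_mul_Li_div_id_eq_LiDivId_mul (a b : ℕ) (x : ℝ) :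
    Li a x * Li b x / x = LiDivId a x * Li b x := by
  rcases eq_or_ne x 0 with rfl | hx
  · simp [Li_zero_right]
  · rw [Li_eq_mul_LiDivId a x]
    field_simp

lemma Li_mul_Li_div_id_eq_mul_LiDivId (a b : ℕ) (x : ℝ) :
    Li a x * Li b x / x = Li a x * LiDivId b x := by
  rw [mul_comm, Li_mul_Li_div_id_eq_LiDivId_mul, mul_comm]

lemma integral_Li_mul_Li_succ_div_id_add {a b : ℕ} (ha : 1 < a) (hb : 1 < b) :
    (∫ x in (0 : ℝ)..1, Li a x * Li (b + 1) x / x)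
      + (∫ x in (0 : ℝ)..1, Li (a + 1) x * Li b x / x)
    = zetaVal (a + 1) * zetaVal (b + 1) := by
  have hI : uIcc (0 : ℝ) 1 ⊆ Icc (-1) 1 := by
    rw [uIcc_of_le zero_le_one]
    exact Icc_subset_Icc (by norm_num) le_rfl
  have hderiv {m : ℕ} (hm : 1 < m) :
      ∀ x ∈ Ioo (min (0 : ℝ) 1) (max 0 1), HasDerivAt (Li (m + 1)) (LiDivId m x) x :=
    fun x hx => hasDerivAt_Li_succ hm (Ioo_subset_Ioo (by norm_num) (by norm_num) hx)
  have hint {m : ℕ} (hm : 1 < m) : IntervalIntegrable (LiDivId m) MeasureTheory.volume 0 1 :=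
    ((continuousOn_LiDivId hm).mono hI).intervalIntegrable
  have hcont {m : ℕ} (hm : 1 < m) : ContinuousOn (Li (m + 1)) (uIcc 0 1) :=
    (continuousOn_Li (by omega)).mono hI
  have hparts := integral_deriv_mul_eq_sub_of_hasDerivAt (hcont ha) (hcont hb)
    (hderiv ha) (hderiv hb) (hint ha) (hint hb)
  rw [integral_add] at hparts
  · simp only [Li_mul_Li_div_id_eq_LiDivId_mul a, Li_mul_Li_div_id_eq_mul_LiDivId (a + 1)]
    rw [hparts, Li_one_right, Li_one_right, Li_zero_right]
    ring
  · exact (hint ha).mul_continuousOn (hcont hb)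
  · exact (hint hb).continuousOn_mul (hcont ha)

lemma integral_Li_add_mul_Li_div_id_add_neg_one_pow_mul {a l : ℕ} (ha : 1 < a) (hl : 1 < l)
    (q : ℕ) :
    (∫ x in (0 : ℝ)..1, Li (a + q) x * Li l x / x)
      + (-1 : ℝ) ^ (q + 1) * ∫ x in (0 : ℝ)..1, Li a x * Li (l + q) x / x
    = ∑ i ∈ Finset.range q, (-1 : ℝ) ^ i * zetaVal (a + q - i) * zetaVal (l + 1 + i) := by
  induction q generalizing l with
  | zero => simp
  | succ q ih =>
    have hstep := integral_Li_mul_Li_succ_div_id_add (a := a + q) (b := l) (by omega) hl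
    have hprev := ih (l := l + 1) (by omega)
    have hsum : ∑ i ∈ Finset.range (q + 1),
          (-1 : ℝ) ^ i * zetaVal (a + (q + 1) - i) * zetaVal (l + 1 + i)
        = zetaVal (a + q + 1) * zetaVal (l + 1)
          - ∑ i ∈ Finset.range q, (-1 : ℝ) ^ i * zetaVal (a + q - i) * zetaVal (l + 1 + 1 + i) := by
      rw [Finset.sum_range_succ', sub_eq_neg_add, ← Finset.sum_neg_distrib]
      congr 1
      · refine Finset.sum_congr rfl fun i _ => ?_
        rw [show a + (q + 1) - (i + 1) = a + q - i by omega,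
          show l + 1 + (i + 1) = l + 1 + 1 + i by omega, pow_succ]
        ring
      · simp [add_assoc]
    rw [hsum, show a + (q + 1) = a + q + 1 by omega, show l + (q + 1) = l + 1 + q by omega]
    linear_combination hstep - hprev

theorem stmt17 (k l p : ℕ) (hk : 2 ≤ k) (hl : 2 ≤ l) (hp : 1 ≤ p) :
    (∫ x in (0:ℝ)..1, Li (k + p - 1) x * Li l x / x)
      + (-1 : ℝ) ^ p * ∫ x in (0:ℝ)..1, Li k x * Li (l + p - 1) x / x
    = ∑ j ∈ Finset.Icc 1 (p - 1), (-1 : ℝ) ^ (j - 1) * zetaVal (k + p - j) * zetaVal (l + j) := by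
  obtain ⟨q, rfl⟩ : ∃ q, p = q + 1 := ⟨p - 1, by omega⟩
  rw [show k + (q + 1) - 1 = k + q by omega, show l + (q + 1) - 1 = l + q by omega,
    integral_Li_add_mul_Li_div_id_add_neg_one_pow_mul hk hl, Nat.add_sub_cancel,
    ← Finset.Ico_add_one_right_eq_Icc, Finset.sum_Ico_eq_sum_range, Nat.add_sub_cancel]
  refine Finset.sum_congr rfl fun i _ => ?_
  rw [show 1 + i - 1 = i by omega, show k + (q + 1) - (1 + i) = k + q - i by omega,
    show l + (1 + i) = l + 1 + i by omega]
end
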